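/- Let x, q be complex numbers with |q| < 1. Then Σ_{i,j≥0} (−1)^j · x^(i+j) · q^(i²+2ij+j²) / ((q⁸;q⁸)_i · (q⁸;q⁸)_j) = Σ_{n≥0} x^(2n) · q^(4n²) / (q¹⁶;q¹⁶)_n. -/

import Mathlib

/-- Finite q-Pochhammer symbol `(a; q)_n = ∏_{k=0}^{n-1} (1 - a q^k)`. -/
noncomputable def qPoch (a q : ℂ) (n : ℕ) : ℂ := ∏ k ∈ Finset.range n, (1 - a * q ^ k)

/-! Grouping the double sum by `n = i + j` turns it into `Σ_n x^n q^(n²) a_n` with `Q = q⁸` and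
`a_n = Σ_{i+j=n} (-1)^j / ((Q;Q)_i (Q;Q)_j)`, the coefficients of `f(t) = e(t) e(-t)` for Euler's
q-exponential `e(t) = Σ t^n / (Q;Q)_n`. From `e(Qt) = (1 - t) e(t)` we get `f(Qt) = (1 - t²) f(t)`,
that is `(1 - Q^(n+2)) a_(n+2) = a_n`; hence the odd coefficients vanish and `a_(2m) = 1/(Q²;Q²)_m`.
The regrouping is justified by absolute convergence: the `(i, j)` term is bounded by `u_i u_j` with
`u_n = (|x| / (1 - |Q|))^n |q|^(n²)`. -/

open Finset PowerSeries Filter Topology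

lemma qPoch_succ (a q : ℂ) (n : ℕ) : qPoch a q (n + 1) = qPoch a q n * (1 - a * q ^ n) :=
  prod_range_succ _ n

lemma qPoch_self_succ (Q : ℂ) (n : ℕ) : qPoch Q Q (n + 1) = qPoch Q Q n * (1 - Q ^ (n + 1)) := by
  rw [qPoch_succ, ← pow_succ']

lemma qPoch_self_ne_zero {Q : ℂ} (hQ : ∀ n, Q ^ (n + 1) ≠ 1) (n : ℕ) : qPoch Q Q n ≠ 0 :=
  prod_ne_zero_iff.mpr fun k _ => by rw [← pow_succ']; exact sub_ne_zero.mpr (hQ k).symm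

lemma pow_succ_ne_one_of_norm_lt_one {Q : ℂ} (hQ : ‖Q‖ < 1) (n : ℕ) : Q ^ (n + 1) ≠ 1 := by
  intro h
  have := congrArg norm h
  rw [norm_pow, norm_one] at this
  exact (pow_lt_one₀ (norm_nonneg Q) hQ n.succ_ne_zero).ne this

noncomputable def qExpSeries (Q : ℂ) : ℂ⟦X⟧ := mk fun n => (qPoch Q Q n)⁻¹

lemma rescale_qExpSeries {Q : ℂ} (hQ : ∀ n, Q ^ (n + 1) ≠ 1) :
    rescale Q (qExpSeries Q) = (1 - X) * qExpSeries Q := by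
  ext (_ | n)
  · simp [qExpSeries, qPoch]
  · have hn := qPoch_self_ne_zero hQ n
    have hn1 : (1 : ℂ) - Q ^ (n + 1) ≠ 0 := sub_ne_zero.mpr (hQ n).symm
    rw [coeff_rescale, sub_mul, one_mul, map_sub, coeff_succ_X_mul]
    simp only [qExpSeries, coeff_mk, qPoch_self_succ]
    field_simp
    ring

lemma rescale_qExpSeries_mul_rescale_neg_one {Q : ℂ} (hQ : ∀ n, Q ^ (n + 1) ≠ 1) :
    rescale Q (qExpSeries Q * rescale (-1) (qExpSeries Q))
      = (1 - X ^ 2) * (qExpSeries Q * rescale (-1) (qExpSeries Q)) := by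
  rw [map_mul, rescale_rescale, mul_comm (-1), ← rescale_rescale, rescale_qExpSeries hQ,
    map_mul, map_sub, map_one, rescale_neg_one_X]
  ring

noncomputable def altQPochSum (Q : ℂ) (n : ℕ) : ℂ :=
  ∑ p ∈ antidiagonal n, (-1) ^ p.2 / (qPoch Q Q p.1 * qPoch Q Q p.2)

lemma coeff_qExpSeries_mul_rescale_neg_one (Q : ℂ) (n : ℕ) :
    coeff n (qExpSeries Q * rescale (-1) (qExpSeries Q)) = altQPochSum Q n := by
  rw [coeff_mul, altQPochSum]
  refine sum_congr rfl fun p _ => ?_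
  simp only [qExpSeries, coeff_rescale, coeff_mk]
  ring

lemma altQPochSum_zero (Q : ℂ) : altQPochSum Q 0 = 1 := by simp [altQPochSum, qPoch]

lemma one_sub_pow_mul_altQPochSum_add_two {Q : ℂ} (hQ : ∀ n, Q ^ (n + 1) ≠ 1) (n : ℕ) :
    (1 - Q ^ (n + 2)) * altQPochSum Q (n + 2) = altQPochSum Q n := by
  have h := congrArg (coeff (n + 2)) (rescale_qExpSeries_mul_rescale_neg_one hQ)
  rw [coeff_rescale, sub_mul, one_mul, map_sub, coeff_X_pow_mul', if_pos (by omega),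
    Nat.add_sub_cancel, coeff_qExpSeries_mul_rescale_neg_one,
    coeff_qExpSeries_mul_rescale_neg_one] at h
  linear_combination -h

lemma altQPochSum_one {Q : ℂ} (hQ : ∀ n, Q ^ (n + 1) ≠ 1) : altQPochSum Q 1 = 0 := by
  have h := congrArg (coeff 1) (rescale_qExpSeries_mul_rescale_neg_one hQ)
  rw [coeff_rescale, sub_mul, one_mul, map_sub, coeff_X_pow_mul', if_neg (by omega),
    coeff_qExpSeries_mul_rescale_neg_one, sub_zero, pow_one] at h
  have h1 : (1 - Q) * altQPochSum Q 1 = 0 := by linear_combination -h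
  exact (mul_eq_zero.mp h1).resolve_left (sub_ne_zero.mpr (by simpa using (hQ 0).symm))

lemma altQPochSum_odd {Q : ℂ} (hQ : ∀ n, Q ^ (n + 1) ≠ 1) : ∀ m, altQPochSum Q (2 * m + 1) = 0
  | 0 => altQPochSum_one hQ
  | m + 1 => by
    have h := one_sub_pow_mul_altQPochSum_add_two hQ (2 * m + 1)
    rw [altQPochSum_odd hQ m] at h
    exact (mul_eq_zero.mp h).resolve_left (sub_ne_zero.mpr (hQ _).symm)

lemma altQPochSum_even {Q : ℂ} (hQ : ∀ n, Q ^ (n + 1) ≠ 1) :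
    ∀ m, altQPochSum Q (2 * m) = (qPoch (Q ^ 2) (Q ^ 2) m)⁻¹
  | 0 => by simp [altQPochSum_zero, qPoch]
  | m + 1 => by
    have h := one_sub_pow_mul_altQPochSum_add_two hQ (2 * m)
    have hm : Q ^ 2 * (Q ^ 2) ^ m = Q ^ (2 * m + 2) := by ring
    rw [altQPochSum_even hQ m] at h
    rw [qPoch_succ, hm, mul_inv, ← h, Nat.mul_succ]
    field_simp [sub_ne_zero.mpr (hQ (2 * m + 1)).symm]

lemma one_sub_norm_pow_le_norm_qPoch {a q : ℂ} (ha : ‖a‖ ≤ 1) (hq : ‖q‖ ≤ 1) (n : ℕ) :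
    (1 - ‖a‖) ^ n ≤ ‖qPoch a q n‖ := by
  induction n with
  | zero => simp [qPoch]
  | succ n ih =>
    have hfactor : 1 - ‖a‖ ≤ ‖1 - a * q ^ n‖ := calc
      1 - ‖a‖ ≤ 1 - ‖a * q ^ n‖ := by
        rw [norm_mul, norm_pow]
        gcongr
        exact mul_le_of_le_one_right (norm_nonneg a) (pow_le_one₀ (norm_nonneg q) hq)
      _ ≤ ‖1 - a * q ^ n‖ := by simpa using norm_sub_norm_le (1 : ℂ) (a * q ^ n)
    rw [qPoch_succ, norm_mul, pow_succ]
    exact mul_le_mul ih hfactor (sub_nonneg.mpr ha) (norm_nonneg _)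

lemma summable_pow_mul_pow_sq (c : ℝ) {r : ℝ} (hr0 : 0 ≤ r) (hr : r < 1) :
    Summable fun n : ℕ => c ^ n * r ^ (n ^ 2) := by
  have hlim : Tendsto (fun n : ℕ => |c| * r ^ n) atTop (𝓝 0) := by
    simpa using (tendsto_pow_atTop_nhds_zero_of_lt_one hr0 hr).const_mul |c|
  refine Summable.of_norm_bounded_eventually_nat summable_geometric_two ?_
  filter_upwards [hlim.eventually_le_const (by norm_num : (0 : ℝ) < 1 / 2)] with n hn
  calc ‖c ^ n * r ^ (n ^ 2)‖ = (|c| * r ^ n) ^ n := by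
        rw [norm_mul, norm_pow, norm_pow, Real.norm_eq_abs, Real.norm_of_nonneg hr0]
        ring
    _ ≤ (1 / 2) ^ n := by gcongr

lemma summable_alternating_doubleSeries (x : ℂ) {q Q : ℂ} (hq : ‖q‖ < 1) (hQ : ‖Q‖ < 1) :
    Summable fun p : ℕ × ℕ =>
      (-1) ^ p.2 * x ^ (p.1 + p.2) * q ^ ((p.1 + p.2) ^ 2) / (qPoch Q Q p.1 * qPoch Q Q p.2) := by
  set u : ℕ → ℝ := fun n => (‖x‖ / (1 - ‖Q‖)) ^ n * ‖q‖ ^ (n ^ 2)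
  have hu : Summable u := summable_pow_mul_pow_sq _ (norm_nonneg q) hq
  have hu0 : ∀ n, 0 ≤ u n := fun n => by have := hQ.le; positivity
  have hfactor (n : ℕ) : ‖x‖ ^ n / ‖qPoch Q Q n‖ ≤ (‖x‖ / (1 - ‖Q‖)) ^ n := by
    rw [div_pow]
    exact div_le_div_of_nonneg_left (by positivity) (pow_pos (by linarith) n)
      (one_sub_norm_pow_le_norm_qPoch hQ.le hQ.le n)
  refine (hu.mul_of_nonneg hu hu0 hu0).of_norm_bounded fun ⟨i, j⟩ => ?_
  have hsq : ‖q‖ ^ ((i + j) ^ 2) ≤ ‖q‖ ^ (i ^ 2) * ‖q‖ ^ (j ^ 2) := by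
    rw [← pow_add]
    exact pow_le_pow_of_le_one (norm_nonneg q) hq.le (by nlinarith [Nat.zero_le (i * j)])
  calc _ = ‖x‖ ^ i / ‖qPoch Q Q i‖ * (‖x‖ ^ j / ‖qPoch Q Q j‖) * ‖q‖ ^ ((i + j) ^ 2) := by
        simp only [norm_div, norm_mul, norm_pow, norm_neg, norm_one, one_pow]
        ring
    _ ≤ (‖x‖ / (1 - ‖Q‖)) ^ i * (‖x‖ / (1 - ‖Q‖)) ^ j * (‖q‖ ^ (i ^ 2) * ‖q‖ ^ (j ^ 2)) := by
        gcongr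
        exacts [hfactor i, hfactor j]
    _ = u i * u j := by ring

lemma Summable.tsum_eq_tsum_sum_antidiagonal {α A : Type*} [AddCommMonoid α] [TopologicalSpace α]
    [ContinuousAdd α] [T3Space α] [AddCommMonoid A] [HasAntidiagonal A] {f : A × A → α}
    (hf : Summable f) : ∑' p, f p = ∑' n, ∑ p ∈ antidiagonal n, f p := by
  let e := HasAntidiagonal.sigmaAntidiagonalEquivProd (A := A)
  have he : Summable fun c => f (e c) := e.summable_iff.mpr hf
  rw [← e.tsum_eq f, he.tsum_sigma' fun n => (hasSum_fintype _).summable]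
  exact tsum_congr fun n => Finset.tsum_subtype _ _

lemma tsum_eq_tsum_even_of_odd_eq_zero {α : Type*} [AddCommMonoid α] [TopologicalSpace α]
    {f : ℕ → α} (hf : ∀ m, f (2 * m + 1) = 0) : ∑' n, f n = ∑' m, f (2 * m) := by
  refine (Function.Injective.tsum_eq (fun a b h => by simpa using h) fun n hn => ?_).symm
  obtain ⟨m, rfl | rfl⟩ := Nat.even_or_odd' n
  · exact ⟨m, rfl⟩
  · exact absurd (hf m) hn

lemma sum_antidiagonal_eq_mul_altQPochSum (x q Q : ℂ) (n : ℕ) :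
    ∑ p ∈ antidiagonal n,
        (-1) ^ p.2 * x ^ (p.1 + p.2) * q ^ ((p.1 + p.2) ^ 2) / (qPoch Q Q p.1 * qPoch Q Q p.2)
      = x ^ n * q ^ (n ^ 2) * altQPochSum Q n := by
  rw [altQPochSum, mul_sum]
  refine sum_congr rfl fun p hp => ?_
  rw [mem_antidiagonal.mp hp]
  ring

theorem stmt_8 (x q : ℂ) (hq : ‖q‖ < 1) :
    (∑' p : ℕ × ℕ,
        (-1 : ℂ) ^ p.2 * x ^ (p.1 + p.2) * q ^ (p.1 ^ 2 + 2 * p.1 * p.2 + p.2 ^ 2) /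
          (qPoch (q ^ 8) (q ^ 8) p.1 * qPoch (q ^ 8) (q ^ 8) p.2))
      = ∑' n : ℕ, x ^ (2 * n) * q ^ (4 * n ^ 2) / qPoch (q ^ 16) (q ^ 16) n := by
  have hQ : ‖q ^ 8‖ < 1 := by
    rw [norm_pow]
    exact pow_lt_one₀ (norm_nonneg q) hq (by norm_num)
  have hQ' := pow_succ_ne_one_of_norm_lt_one hQ
  simp_rw [← add_sq]
  rw [(summable_alternating_doubleSeries x hq hQ).tsum_eq_tsum_sum_antidiagonal,
    tsum_eq_tsum_even_of_odd_eq_zero fun m => by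
      rw [sum_antidiagonal_eq_mul_altQPochSum, altQPochSum_odd hQ', mul_zero]]
  refine tsum_congr fun m => ?_
  rw [sum_antidiagonal_eq_mul_altQPochSum, altQPochSum_even hQ', ← pow_mul]
  ring
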